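/- arXiv:0804.1012 — 2 statements merged into one kernel-verified Lean document; each statement's English description precedes it below -/
import Mathlib

section
/- Over a Bézout domain R, every finitely generated torsion-free R-module is free. -/
/-!
A finitely generated torsion-free module `M` over a domain embeds in some `R^k`: if `a ≠ 0` and
`a • M` lies in the span of a maximal linearly independent subfamily of a generating family, then
multiplication by `a` is such an embedding. Over a Bézout domain a finitely generated module
`N ⊆ R^(n+1)` is free by induction on `n`: the first coordinates of `N` form a finitely generated,
hence principal, hence free ideal, so `N` splits as that ideal times the kernel of the first
coordinate, a finitely generated submodule of `R^n`.
-/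

open Function Submodule Set

namespace LinearMap

variable {R N P : Type*} [Ring R] [AddCommGroup N] [Module R N] [AddCommGroup P] [Module R P]

theorem nonempty_linearEquiv_ker_prod_range (f : N →ₗ[R] P) [Module.Projective R (range f)] :
    Nonempty (N ≃ₗ[R] ker f × range f) := by
  have hexact : Exact (ker f).subtype f.rangeRestrict := by
    rw [LinearMap.exact_iff, ker_rangeRestrict, Submodule.range_subtype]
  obtain ⟨l, hl⟩ := f.rangeRestrict.exists_rightInverse_of_surjective f.range_rangeRestrict
  exact ⟨(hexact.splitSurjectiveEquiv (ker f).injective_subtype ⟨l, hl⟩).1⟩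

end LinearMap

section Domain

variable {R : Type*} [CommRing R] [IsDomain R]

theorem Ideal.free_of_isPrincipal (I : Ideal R) [I.IsPrincipal] : Module.Free R I := by
  obtain rfl | hI := eq_or_ne I ⊥
  · infer_instance
  · exact .of_equiv (Ideal.isoBaseOfIsPrincipal hI)

theorem Module.free_of_injective_pi [IsBezout R] {n : ℕ} :
    ∀ {N : Type*} [AddCommGroup N] [Module R N] [Module.Finite R N] (i : N →ₗ[R] Fin n → R),
      Function.Injective i → Module.Free R N := by
  induction n with
  | zero =>
    intro N _ _ _ i hi
    have := hi.subsingleton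
    exact .of_subsingleton R N
  | succ n ih =>
    intro N _ _ _ i hi
    let f : N →ₗ[R] R := LinearMap.proj 0 ∘ₗ i
    have : (LinearMap.range f).IsPrincipal := IsBezout.isPrincipal_of_FG _ (fg_range f)
    have := Ideal.free_of_isPrincipal (LinearMap.range f)
    obtain ⟨e⟩ := f.nonempty_linearEquiv_ker_prod_range
    have : Module.Finite R (LinearMap.ker f) :=
      .of_surjective (LinearMap.fst R _ _ ∘ₗ e.toLinearMap)
        (Prod.fst_surjective.comp e.surjective)
    let i' : LinearMap.ker f →ₗ[R] Fin n → R :=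
      LinearMap.funLeft R R Fin.succ ∘ₗ i ∘ₗ (LinearMap.ker f).subtype
    have hi' : Function.Injective i' := by
      rintro ⟨x, hx⟩ ⟨y, hy⟩ hxy
      rw [LinearMap.mem_ker] at hx hy
      refine Subtype.ext (hi (funext fun j ↦ ?_))
      cases j using Fin.cases with
      | zero => exact hx.trans hy.symm
      | succ j => exact congrFun hxy j
    have := ih i' hi'
    exact .of_equiv e.symm

variable {M : Type*} [AddCommGroup M] [Module R M]

theorem Module.exists_linearIndependent_smul_mem_span [Module.Finite R M] :
    ∃ (k : ℕ) (v : Fin k → M), LinearIndependent R v ∧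
      ∃ a : R, a ≠ 0 ∧ ∀ x : M, a • x ∈ span R (range v) := by
  obtain ⟨n, s, hs⟩ := Module.Finite.exists_fin (R := R) (M := M)
  obtain ⟨I, hI, hmax⟩ := exists_maximal_linearIndepOn R s
  have hsmul (j : Fin n) : ∃ a : R, a ≠ 0 ∧ a • s j ∈ span R (s '' I) := by
    by_cases hj : j ∈ I
    · exact ⟨1, one_ne_zero, by simpa using subset_span (mem_image_of_mem s hj)⟩
    · exact hmax j hj
  choose a ha0 ha using hsmul
  let e := (Finite.equivFin I).symm
  let v : Fin _ → M := fun i ↦ s (e i)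
  have hrange : range v = s '' I := by
    rw [image_eq_range, ← EquivLike.range_comp _ e]
    rfl
  refine ⟨_, v, hI.comp _ e.injective, ∏ j, a j,
    Finset.prod_ne_zero_iff.2 fun j _ ↦ ha0 j, fun x ↦ ?_⟩
  have hle : span R (range s) ≤ (span R (range v)).comap (LinearMap.lsmul R M (∏ j, a j)) := by
    refine span_le.2 (range_subset_iff.2 fun j ↦ ?_)
    obtain ⟨c, hc⟩ := Finset.dvd_prod_of_mem a (Finset.mem_univ j)
    rw [SetLike.mem_coe, mem_comap, LinearMap.lsmul_apply, hc, mul_comm, mul_smul, hrange]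
    exact smul_mem _ _ (ha j)
  rw [hs] at hle
  exact hle mem_top

theorem Module.exists_injective_pi_of_isTorsionFree [Module.Finite R M] [IsTorsionFree R M] :
    ∃ (k : ℕ) (f : M →ₗ[R] Fin k → R), Function.Injective f := by
  obtain ⟨k, v, hv, a, ha0, ha⟩ := exists_linearIndependent_smul_mem_span (R := R) (M := M)
  let g : M →ₗ[R] span R (range v) := (LinearMap.lsmul R M a).codRestrict _ ha
  have hg : Function.Injective g := fun x y hxy ↦ LinearMap.lsmul_injective ha0 congr(($hxy).1)
  let b := (Basis.span hv).equivFun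
  exact ⟨k, b.toLinearMap ∘ₗ g, b.injective.comp hg⟩

end Domain

theorem stmt_12 (R : Type*) [CommRing R] [IsDomain R] [IsBezout R]
    (M : Type*) [AddCommGroup M] [Module R M] [Module.Finite R M]
    (htf : Submodule.torsion R M = ⊥) :
    Module.Free R M := by
  have : Module.IsTorsionFree R M := isTorsionFree_iff_torsion_eq_bot.mpr htf
  obtain ⟨k, f, hf⟩ := Module.exists_injective_pi_of_isTorsionFree (R := R) (M := M)
  exact Module.free_of_injective_pi f hf
end

section
/- Let R be a Bézout domain embedded via an injective ring homomorphism 𝓛 into the ring 𝒪 of entire functions, and suppose 𝓛 maps every non-unit of R to a non-unit of 𝒪 (i.e. to an entire function with a zero). Then for every finitely presented R-module Σ: Σ is torsion free if and only if 𝒪 ⊗_R Σ is torsion free. -/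
/-!
Over a Bézout domain a module is torsion free iff it is flat, and flatness survives base change;
this gives one direction. Conversely, a finitely generated torsion-free module over a Bézout
domain `R` is free: embed it in `Kⁿ`, `K = Frac R`, and split off one coordinate at a time, the
image of a coordinate being a finitely generated, hence principal, fractional ideal. So for the
torsion submodule `T` of `M`, the quotient `M ⧸ T` is free; hence `T` is finitely generated and
`𝒪 ⊗ T` embeds in `𝒪 ⊗ M`. As `𝒪 ⊗ T` is torsion, it vanishes when `𝒪 ⊗ M` is torsion free.
But a nonzero `T` surjects onto some `R ⧸ 𝔪` with `𝔪` maximal, and `𝒪 ⊗ R ⧸ 𝔪 = 𝒪 ⧸ 𝔪𝒪 ≠ 0`: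
otherwise `1` lies in the extension of a finitely generated, hence principal, ideal `(d) ⊆ 𝔪`,
so `𝓛 d` and therefore `d` would be a unit.
-/

open TensorProduct

/-- The ring of entire functions, as a subring of `ℂ → ℂ`. -/
def EntireSubring : Subring (ℂ → ℂ) where
  carrier := {f | Differentiable ℂ f}
  mul_mem' hf hg := hf.mul hg
  add_mem' hf hg := hf.add hg
  one_mem' := differentiable_const 1
  zero_mem' := differentiable_const 0
  neg_mem' hf := hf.neg

open scoped nonZeroDivisors

instance : NoZeroDivisors EntireSubring where
  eq_zero_or_eq_zero_of_mul_eq_zero {f g} hfg := by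
    have hfg' : ∀ z ∈ Set.univ, f.1 z * g.1 z = 0 := fun z _ =>
      congrFun (congrArg Subtype.val hfg) z
    refine (AnalyticOnNhd.eq_zero_or_eq_zero_of_mul_eq_zero (fun z _ => f.2.analyticAt z)
      (fun z _ => g.2.analyticAt z) hfg' isPreconnected_univ).imp ?_ ?_ <;>
    exact fun h => Subtype.ext (funext fun z => h z trivial)

instance : IsDomain EntireSubring := NoZeroDivisors.to_isDomain _

theorem Module.Free.of_exact {R N M P : Type*} [Ring R] [AddCommGroup N] [Module R N]
    [AddCommGroup M] [Module R M] [AddCommGroup P] [Module R P] [Module.Free R N]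
    [Module.Free R P] {f : N →ₗ[R] M} {g : M →ₗ[R] P} (hf : Function.Injective f)
    (hg : Function.Surjective g) (H : Function.Exact f g) : Module.Free R M := by
  obtain ⟨l, hl⟩ := Module.projective_lifting_property g .id hg
  obtain ⟨e, -⟩ := (H.split_tfae'.out 0 2 rfl rfl).mp ⟨hf, l, hl⟩
  exact .of_equiv e.symm

section FreeOverBezout

variable {R : Type*} [CommRing R] [IsDomain R]

theorem Submodule.free_of_isPrincipal {M : Type*} [AddCommGroup M] [Module R M]
    [Module.IsTorsionFree R M] (S : Submodule R M) (hS : S.IsPrincipal) : Module.Free R S := by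
  obtain ⟨x, rfl⟩ := hS.principal
  by_cases hx : x = 0
  · subst hx
    rw [Submodule.span_zero_singleton]
    infer_instance
  · exact .of_equiv (LinearEquiv.toSpanNonzeroSingleton R M x hx)

variable [IsBezout R]

theorem Submodule.free_of_fg_fractionRing (S : Submodule R (FractionRing R)) (hS : S.FG) :
    Module.Free R S := by
  let I : FractionalIdeal R⁰ (FractionRing R) := ⟨S, FractionalIdeal.isFractional_of_fg hS⟩
  have : Module.Finite R I.num :=
    have : Module.Finite R (I : Submodule R (FractionRing R)) := Module.Finite.iff_fg.mpr hS
    .equiv I.equivNumOfIsLocalization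
  exact S.free_of_isPrincipal <| I.isPrincipal_of_isPrincipal_num <|
    IsBezout.isPrincipal_of_FG _ (Module.Finite.iff_fg.mp this)

theorem Module.free_of_injective_fractionRing_pi :
    ∀ (n : ℕ) {M : Type*} [AddCommGroup M] [Module R M] [Module.Finite R M]
      (f : M →ₗ[R] Fin n → FractionRing R), Function.Injective f → Module.Free R M
  | 0, M, _, _, _, f, hf =>
    have : Subsingleton M := hf.subsingleton
    inferInstance
  | n + 1, M, _, _, _, f, hf => by
    let π := LinearMap.proj 0 ∘ₗ f
    have : Module.Free R (LinearMap.range π) := (LinearMap.range π).free_of_fg_fractionRing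
      (LinearMap.range_eq_map π ▸ Module.Finite.fg_top.map π)
    have : Module.FinitePresentation R (LinearMap.range π) :=
      Module.finitePresentation_of_projective _ _
    let g := π.rangeRestrict
    have : Module.Finite R (LinearMap.ker g) :=
      Module.Finite.iff_fg.mpr (Module.FinitePresentation.fg_ker g π.surjective_rangeRestrict)
    have : Module.Free R (LinearMap.ker g) := by
      refine Module.free_of_injective_fractionRing_pi n
        (LinearMap.funLeft R _ Fin.succ ∘ₗ f ∘ₗ (LinearMap.ker g).subtype) ?_
      have hzero : ∀ z ∈ LinearMap.ker g, f z 0 = 0 := fun z hz => by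
        simpa [g, π, Subtype.ext_iff] using hz
      rintro ⟨x, hx⟩ ⟨y, hy⟩ hxy
      refine Subtype.ext (hf (funext fun i => Fin.cases ?_ (fun j => congrFun hxy j) i))
      rw [hzero x hx, hzero y hy]
    exact .of_exact (LinearMap.ker g).injective_subtype π.surjective_rangeRestrict
      g.exact_subtype_ker_map

theorem Module.free_of_finite_of_isTorsionFree {M : Type*} [AddCommGroup M] [Module R M]
    [Module.Finite R M] [Module.IsTorsionFree R M] : Module.Free R M := by
  let b := Module.finBasis (FractionRing R) (LocalizedModule R⁰ M)
  refine Module.free_of_injective_fractionRing_pi _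
    ((b.equivFun.restrictScalars R).toLinearMap ∘ₗ LocalizedModule.mkLinearMap R⁰ M) ?_
  refine (b.equivFun.restrictScalars R).injective.comp ?_
  rw [← LinearMap.ker_eq_bot, eq_bot_iff]
  intro m hm
  obtain ⟨r, hr, hrm⟩ := LocalizedModule.mem_ker_mkLinearMap_iff.mp hm
  exact (smul_eq_zero_iff_right (nonZeroDivisors.ne_zero hr)).mp hrm

end FreeOverBezout

section BaseChange

variable {R A : Type*} [CommRing R] [CommRing A] [Algebra R A]

theorem Ideal.map_ne_top_of_isBezout [IsBezout R]
    (hnu : ∀ r : R, ¬IsUnit r → ¬IsUnit (algebraMap R A r)) {I : Ideal R} (hI : I ≠ ⊤) :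
    I.map (algebraMap R A) ≠ ⊤ := by
  classical
  intro htop
  have h1 : (1 : A) ∈ I.map (algebraMap R A) := htop ▸ Submodule.mem_top
  obtain ⟨s, hsI, hs⟩ := Submodule.mem_span_finite_of_mem_span h1
  obtain ⟨s', hs'I, rfl⟩ := Finset.subset_set_image_iff.mp hsI
  obtain ⟨d, hd⟩ := (IsBezout.isPrincipal_of_FG (Ideal.span (s' : Set R)) ⟨s', rfl⟩).principal
  have hdI : d ∈ I := Ideal.span_le.mpr hs'I (hd ▸ Ideal.mem_span_singleton_self d)
  have hdu : IsUnit (algebraMap R A d) := by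
    rw [← Ideal.span_singleton_eq_top, eq_top_iff_one, ← Set.image_singleton, ← Ideal.map_span,
      ← Ideal.submodule_span_eq, ← hd, Ideal.map_span, ← Finset.coe_image]
    exact hs
  exact hI (Ideal.eq_top_of_isUnit_mem I hdI (not_not.mp fun h => hnu d h hdu))

theorem nontrivial_tensorProduct_of_isBezout [IsBezout R]
    (hnu : ∀ r : R, ¬IsUnit r → ¬IsUnit (algebraMap R A r)) (T : Type*) [AddCommGroup T]
    [Module R T] [Module.Finite R T] [Nontrivial T] : Nontrivial (A ⊗[R] T) := by
  obtain ⟨N, hN⟩ := IsCoatomic.exists_coatom (Submodule R T)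
  have : IsSimpleModule R (T ⧸ N) := isSimpleModule_iff_isCoatom.mpr hN
  obtain ⟨I, hI, ⟨e⟩⟩ := isSimpleModule_iff_quot_maximal.mp this
  have : Nontrivial (A ⧸ I.map (algebraMap R A)) :=
    Ideal.Quotient.nontrivial_iff.mpr (Ideal.map_ne_top_of_isBezout hnu hI.ne_top)
  have : Nontrivial (A ⊗[R] (R ⧸ I)) :=
    (Algebra.TensorProduct.quotIdealMapEquivTensorQuot A I).symm.surjective.nontrivial
  exact (LinearMap.lTensor_surjective A (g := (e : T ⧸ N →ₗ[R] R ⧸ I) ∘ₗ N.mkQ)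
    (e.surjective.comp N.mkQ_surjective)).nontrivial

theorem Module.IsTorsion.tensorProduct [Nontrivial R] [IsDomain A]
    (hinj : Function.Injective (algebraMap R A)) {T : Type*} [AddCommMonoid T] [Module R T]
    (hT : Module.IsTorsion R T) : Module.IsTorsion A (A ⊗[R] T) := by
  intro z
  suffices z ∈ Submodule.torsion A (A ⊗[R] T) from this
  induction z using TensorProduct.induction_on with
  | zero => exact zero_mem _
  | tmul a t =>
    obtain ⟨r, hr⟩ := hT (x := t)
    refine ⟨⟨algebraMap R A r, mem_nonZeroDivisors_of_ne_zero ?_⟩, ?_⟩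
    · exact (map_ne_zero_iff _ hinj).mpr (nonZeroDivisors.ne_zero r.2)
    · show algebraMap R A r • (a ⊗ₜ[R] t) = 0
      rw [algebraMap_smul, ← TensorProduct.tmul_smul, ← Submonoid.smul_def, hr, tmul_zero]
  | add x y hx hy => exact add_mem hx hy

variable {M : Type*} [AddCommGroup M] [Module R M] [IsDomain R] [IsBezout R]

theorem torsion_tensorProduct_eq_bot (h : Submodule.torsion R M = ⊥) :
    Submodule.torsion A (A ⊗[R] M) = ⊥ :=
  have : Module.Flat R M := Module.Flat.flat_iff_torsion_eq_bot_of_isBezout.mpr h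
  Module.Flat.torsion_eq_bot

theorem torsion_eq_bot_of_torsion_tensorProduct_eq_bot [IsDomain A]
    (hinj : Function.Injective (algebraMap R A))
    (hnu : ∀ r : R, ¬IsUnit r → ¬IsUnit (algebraMap R A r)) [Module.Finite R M]
    (h : Submodule.torsion A (A ⊗[R] M) = ⊥) : Submodule.torsion R M = ⊥ := by
  set T := Submodule.torsion R M
  have : Module.Free R (M ⧸ T) := Module.free_of_finite_of_isTorsionFree
  have : Module.FinitePresentation R (M ⧸ T) := Module.finitePresentation_of_projective _ _
  have : Module.Finite R T := Module.Finite.iff_fg.mpr <| by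
    simpa using Module.FinitePresentation.fg_ker T.mkQ T.mkQ_surjective
  have hι : Function.Injective (T.subtype.baseChange A) := by
    rw [LinearMap.baseChange_eq_ltensor]
    exact LinearMap.lTensor_injective_of_exact_of_flat T.mkQ T.mkQ_surjective T.subtype
      T.injective_subtype (LinearMap.exact_subtype_mkQ T) A
  have hzero : ∀ z, T.subtype.baseChange A z = 0 := fun z => by
    obtain ⟨a, ha⟩ := Submodule.torsion_isTorsion.tensorProduct hinj (x := z)
    have : T.subtype.baseChange A z ∈ Submodule.torsion A (A ⊗[R] M) :=
      ⟨a, by rw [Submonoid.smul_def, ← map_smul, ← Submonoid.smul_def, ha, map_zero]⟩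
    rwa [h, Submodule.mem_bot] at this
  have hsub : Subsingleton (A ⊗[R] T) := ⟨fun x y => hι ((hzero x).trans (hzero y).symm)⟩
  rw [← Submodule.subsingleton_iff_eq_bot]
  by_contra hT
  have : Nontrivial T := not_subsingleton_iff_nontrivial.mp hT
  exact not_nontrivial_iff_subsingleton.mpr hsub (nontrivial_tensorProduct_of_isBezout hnu T)

end BaseChange

set_option synthInstance.maxHeartbeats 400000 in
theorem stmt_16 (R : Type*) [CommRing R] [IsDomain R] [IsBezout R]
    [Algebra R EntireSubring]
    (hinj : Function.Injective (algebraMap R EntireSubring))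
    (hnu : ∀ r : R, ¬ IsUnit r → ¬ IsUnit (algebraMap R EntireSubring r))
    (M : Type*) [AddCommGroup M] [Module R M] [Module.FinitePresentation R M] :
    Submodule.torsion R M = ⊥ ↔
      Submodule.torsion EntireSubring ((EntireSubring : Type) ⊗[R] M) = ⊥ :=
  ⟨torsion_tensorProduct_eq_bot, torsion_eq_bot_of_torsion_tensorProduct_eq_bot hinj hnu⟩
end
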